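/- The continuous-to-discrete degrading transform loses at most 2/μ in capacity: for a BMS channel W with output density f(y|0) on ℝ (symmetry f(y|0)=f(−y|1), f(y|0) ≥ f(y|1) for y ≥ 0), partition [0,∞) into ν sets A_i = {y ≥ 0 : (i−1)/ν ≤ C[λ(y)] < i/ν} (weak upper inequality for i = ν), and define the 2ν-output channel Q by Q(z_i|0) = ∫_{A_i} f(y|0)dy, Q(z̄_i|0) = ∫_{A_i} f(−y|0)dy (and symmetrically for input 1). Then 0 ≤ I(W) − I(Q) ≤ 1/ν, where I denotes symmetric capacity. -/

import Mathlib

open MeasureTheory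

/-- `C[λ]` for the pair `(p,q)` with `λ = p/q`: per-pair symmetric capacity.
For `p = q = 0` the convention `λ = 1`, `C[1] = 0` is used; when `q = 0 < p`
the Lean conventions `x/0 = 0`, `logb 2 0 = 0` yield `C = 1 = C[∞]`. -/
noncomputable def Cfun (p q : ℝ) : ℝ :=
  if p = 0 ∧ q = 0 then 0
  else 1 - p / (p + q) * Real.logb 2 ((p + q) / p)
         - q / (p + q) * Real.logb 2 ((p + q) / q)

/-- The partition sets `A_i ⊆ [0,∞)` (here `i : Fin ν` stands for `i+1` in the
paper's notation, so the last cell uses a weak upper inequality). -/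
def Aset (f : Bool → ℝ → ℝ) (ν : ℕ) (i : Fin ν) : Set ℝ :=
  {y | 0 ≤ y ∧ (i : ℝ) / ν ≤ Cfun (f false y) (f true y) ∧
    (if (i : ℕ) + 1 = ν then Cfun (f false y) (f true y) ≤ 1
     else Cfun (f false y) (f true y) < ((i : ℝ) + 1) / ν)}

/-- `Q(z_i|0) = ∫_{A_i} f(y|0) dy`. -/
noncomputable def qz (f : Bool → ℝ → ℝ) (ν : ℕ) (i : Fin ν) : ℝ :=
  ∫ y in Aset f ν i, f false y

/-- `Q(z̄_i|0) = ∫_{A_i} f(-y|0) dy`. -/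
noncomputable def qzbar (f : Bool → ℝ → ℝ) (ν : ℕ) (i : Fin ν) : ℝ :=
  ∫ y in Aset f ν i, f false (-y)

/-- Symmetric capacity of the continuous BMS channel with densities `f`. -/
noncomputable def Icont (f : Bool → ℝ → ℝ) : ℝ :=
  ∫ y in Set.Ici (0 : ℝ), (f false y + f true y) * Cfun (f false y) (f true y)

/-- Symmetric capacity of the degraded `2ν`-output channel `Q`. -/
noncomputable def Idisc (f : Bool → ℝ → ℝ) (ν : ℕ) : ℝ :=
  ∑ i : Fin ν, (qz f ν i + qzbar f ν i) * Cfun (qz f ν i) (qzbar f ν i)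

/-!
On a cell `A_i` put `P = ∫_{A_i} f(y|0) dy` and `Q = ∫_{A_i} f(y|1) dy = Q(z̄_i|0)`. The map
`(p, q) ↦ (p + q) C(p, q)` is convex and positively homogeneous, so by Jensen's inequality the
cell contributes at least `(P + Q) C(P, Q)` to `I(W)`, which is its contribution to `I(Q)`.
Conversely `C ∈ [i/ν, (i+1)/ν]` on `A_i` (0-based `i`); as `Q/P` is an average of the likelihood
ratios `f(y|1)/f(y|0) ≤ 1` over `A_i` and `C` decreases in that ratio, also `C(P, Q) ≥ i/ν`, so the
cell loses at most `(P + Q)/ν`. By the symmetry of the channel the cell masses `P + Q` add up to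
`∫ f(y|0) dy = 1`.
-/

open Real Set Function

lemma Cfun_comm (p q : ℝ) : Cfun p q = Cfun q p := by
  simp only [Cfun, and_comm, add_comm p q]
  split_ifs <;> ring

lemma mul_Cfun_zero_right (p : ℝ) : p * Cfun p 0 = p := by
  rcases eq_or_ne p 0 with rfl | hp
  · simp
  · simp [Cfun, hp]

lemma Cfun_eq_binEntropy {p q : ℝ} (hpq : p + q ≠ 0) :
    Cfun p q = 1 - binEntropy (q / (p + q)) / log 2 := by
  have hne : ¬(p = 0 ∧ q = 0) := by rintro ⟨rfl, rfl⟩; simp at hpq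
  have hcompl : 1 - q / (p + q) = p / (p + q) := by field_simp; ring
  rw [Cfun, if_neg hne, binEntropy, hcompl, inv_div, inv_div]
  simp only [logb]
  ring

lemma Cfun_nonneg {p q : ℝ} (hp : 0 ≤ p) (hq : 0 ≤ q) : 0 ≤ Cfun p q := by
  rcases (add_nonneg hp hq).eq_or_lt' with hpq | hpq
  · obtain ⟨rfl, rfl⟩ : p = 0 ∧ q = 0 := ⟨by linarith, by linarith⟩
    simp [Cfun]
  rw [Cfun_eq_binEntropy hpq.ne', sub_nonneg, div_le_one (log_pos one_lt_two)]
  exact binEntropy_le_log_two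

lemma Cfun_le_one {p q : ℝ} (hp : 0 ≤ p) (hq : 0 ≤ q) : Cfun p q ≤ 1 := by
  rcases (add_nonneg hp hq).eq_or_lt' with hpq | hpq
  · obtain ⟨rfl, rfl⟩ : p = 0 ∧ q = 0 := ⟨by linarith, by linarith⟩
    simp [Cfun]
  rw [Cfun_eq_binEntropy hpq.ne', sub_le_self_iff]
  exact div_nonneg (binEntropy_nonneg (by positivity) (div_le_one_of_le₀ (by linarith) hpq.le))
    (log_pos one_lt_two).le

lemma Cfun_le_Cfun {p q P Q : ℝ} (hp : 0 < p) (hP : 0 < P) (hqp : q ≤ p) (hQ : 0 ≤ Q)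
    (hratio : Q * p ≤ q * P) : Cfun p q ≤ Cfun P Q := by
  have hq : 0 ≤ q := nonneg_of_mul_nonneg_left ((mul_nonneg hQ hp.le).trans hratio) hP
  have hmem : ∀ {a b : ℝ}, 0 < a → 0 ≤ b → b ≤ a → b / (a + b) ∈ Icc (0 : ℝ) 2⁻¹ :=
    fun ha hb hba => ⟨by positivity, by rw [div_le_iff₀ (by linarith)]; linarith⟩
  have hQP : Q ≤ P := by nlinarith
  rw [Cfun_eq_binEntropy (by positivity), Cfun_eq_binEntropy (by positivity)]
  have hle : Q / (P + Q) ≤ q / (p + q) := by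
    rw [div_le_div_iff₀ (by positivity) (by positivity)]; nlinarith
  have hH := binEntropy_strictMonoOn.monotoneOn (hmem hP hQ hQP) (hmem hp hq hqp) hle
  gcongr

lemma mul_log_le_mul_log_add_sub {p a : ℝ} (hp : 0 ≤ p) (ha : 0 < a) :
    p * log a ≤ p * log p + (a - p) := by
  rcases hp.eq_or_lt with rfl | hp
  · simpa using ha.le
  have := mul_le_mul_of_nonneg_left (log_le_sub_one_of_pos (div_pos ha hp)) hp.le
  rw [log_div ha.ne' hp.ne'] at this
  field_simp at this
  linarith

/-- The two-term log-sum inequality. -/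
lemma mul_log_add_mul_log_sub_le {p q P Q : ℝ} (hp : 0 ≤ p) (hq : 0 ≤ q) (hP : 0 < P)
    (hQ : 0 < Q) :
    p * log P + q * log Q - (p + q) * log (P + Q)
      ≤ p * log p + q * log q - (p + q) * log (p + q) := by
  rcases (add_nonneg hp hq).eq_or_lt' with hpq | hpq
  · obtain ⟨rfl, rfl⟩ : p = 0 ∧ q = 0 := ⟨by linarith, by linarith⟩
    simp
  have hS : 0 < P + Q := by linarith
  have key : ∀ {x X : ℝ}, 0 ≤ x → 0 < X →
      x * log X + x * log (p + q) - x * log (P + Q) ≤ x * log x + (X * (p + q) / (P + Q) - x) := by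
    intro x X hx hX
    have := mul_log_le_mul_log_add_sub hx (a := X * (p + q) / (P + Q)) (by positivity)
    rwa [log_div (by positivity) hS.ne', log_mul hX.ne' hpq.ne', mul_sub, mul_add] at this
  have hsum : P * (p + q) / (P + Q) + Q * (p + q) / (P + Q) = p + q := by field_simp
  linarith [key hp hP, key hq hQ]

lemma add_mul_Cfun_mul_log_two {p q : ℝ} (hp : 0 ≤ p) (hq : 0 ≤ q) :
    (p + q) * Cfun p q * log 2
      = (p + q) * log 2 + p * log p + q * log q - (p + q) * log (p + q) := by
  rcases hp.eq_or_lt with rfl | hp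
  · rw [Cfun_comm, zero_add, mul_Cfun_zero_right]; simp
  rcases hq.eq_or_lt with rfl | hq
  · rw [add_zero, mul_Cfun_zero_right]; simp
  have hpq : 0 < p + q := by linarith
  rw [Cfun, if_neg (by simp [hp.ne'])]
  simp only [logb, log_div hpq.ne' hp.ne', log_div hpq.ne' hq.ne']
  field_simp
  ring

/-- The tangent plane at `(P, Q)` of the convex, positively homogeneous map
`(p, q) ↦ (p + q) C(p, q)`; it stays below the map by the log-sum inequality. -/
lemma exists_linear_le_add_mul_Cfun {P Q : ℝ} (hP : 0 < P) (hQ : 0 < Q) :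
    ∃ a b : ℝ, a * P + b * Q = (P + Q) * Cfun P Q ∧
      ∀ p q, 0 ≤ p → 0 ≤ q → a * p + b * q ≤ (p + q) * Cfun p q := by
  have hl : 0 < log 2 := log_pos one_lt_two
  refine ⟨(log 2 + log P - log (P + Q)) / log 2, (log 2 + log Q - log (P + Q)) / log 2, ?_, ?_⟩
  · rw [← mul_div_cancel_right₀ ((P + Q) * Cfun P Q) hl.ne', add_mul_Cfun_mul_log_two hP.le hQ.le]
    field_simp
    ring
  · intro p q hp hq
    rw [← mul_div_cancel_right₀ ((p + q) * Cfun p q) hl.ne', add_mul_Cfun_mul_log_two hp hq]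
    rw [div_mul_eq_mul_div, div_mul_eq_mul_div, ← add_div]
    gcongr
    nlinarith [mul_log_add_mul_log_sub_le hp hq hP hQ]

lemma measurable_Cfun : Measurable (Function.uncurry Cfun) := by
  have hzero : MeasurableSet {x : ℝ × ℝ | x.1 = 0 ∧ x.2 = 0} :=
    (measurableSet_eq_fun measurable_fst measurable_const).inter
      (measurableSet_eq_fun measurable_snd measurable_const)
  exact Measurable.ite hzero measurable_const (by simp only [logb]; fun_prop)

section Integral

variable {α : Type*} [MeasurableSpace α] {μ : Measure α} {g h : α → ℝ}

lemma integrable_add_mul_Cfun (hg : Measurable g) (hh : Measurable h) (hg0 : 0 ≤ g)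
    (hh0 : 0 ≤ h) (hgi : Integrable g μ) (hhi : Integrable h μ) :
    Integrable (fun y => (g y + h y) * Cfun (g y) (h y)) μ :=
  (hgi.add hhi).mul_bdd (measurable_Cfun.comp (hg.prodMk hh)).aestronglyMeasurable
    (c := 1) (ae_of_all _ fun y => by
      rw [Real.norm_of_nonneg (Cfun_nonneg (hg0 y) (hh0 y))]
      exact Cfun_le_one (hg0 y) (hh0 y))

lemma integral_add_mul_Cfun_of_ae_eq_zero (hh : h =ᵐ[μ] 0) :
    ∫ y, (g y + h y) * Cfun (g y) (h y) ∂μ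
      = ((∫ y, g y ∂μ) + ∫ y, h y ∂μ) * Cfun (∫ y, g y ∂μ) (∫ y, h y ∂μ) := by
  have hQ : ∫ y, h y ∂μ = 0 := by simp [integral_congr_ae hh]
  rw [hQ, add_zero, mul_Cfun_zero_right]
  exact integral_congr_ae (hh.mono fun y (hy : h y = 0) => by
    simp only [hy, add_zero, mul_Cfun_zero_right])

lemma add_mul_Cfun_integral_le (hg : Measurable g) (hh : Measurable h) (hg0 : 0 ≤ g)
    (hh0 : 0 ≤ h) (hgi : Integrable g μ) (hhi : Integrable h μ) :
    ((∫ y, g y ∂μ) + ∫ y, h y ∂μ) * Cfun (∫ y, g y ∂μ) (∫ y, h y ∂μ)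
      ≤ ∫ y, (g y + h y) * Cfun (g y) (h y) ∂μ := by
  rcases (integral_nonneg hh0).eq_or_lt with hQ | hQ
  · rw [integral_add_mul_Cfun_of_ae_eq_zero ((integral_eq_zero_iff_of_nonneg hh0 hhi).1 hQ.symm)]
  rcases (integral_nonneg hg0).eq_or_lt with hP | hP
  · have := integral_add_mul_Cfun_of_ae_eq_zero (g := h) (μ := μ)
      ((integral_eq_zero_iff_of_nonneg hg0 hgi).1 hP.symm)
    simp only [add_comm (h _), add_comm (∫ y, h y ∂μ), Cfun_comm (h _), Cfun_comm (∫ y, h y ∂μ)]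
      at this
    rw [this]
  obtain ⟨a, b, hab, hle⟩ := exists_linear_le_add_mul_Cfun hP hQ
  calc ((∫ y, g y ∂μ) + ∫ y, h y ∂μ) * Cfun (∫ y, g y ∂μ) (∫ y, h y ∂μ)
      = ∫ y, (a * g y + b * h y) ∂μ := by
        rw [integral_add (hgi.const_mul a) (hhi.const_mul b), integral_const_mul,
          integral_const_mul, hab]
    _ ≤ ∫ y, (g y + h y) * Cfun (g y) (h y) ∂μ :=
        integral_mono ((hgi.const_mul a).add (hhi.const_mul b))
          (integrable_add_mul_Cfun hg hh hg0 hh0 hgi hhi) fun y => hle _ _ (hg0 y) (hh0 y)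

lemma frequently_integral_mul_le (hg0 : 0 ≤ g) (hgi : Integrable g μ) (hhi : Integrable h μ)
    (hhg : h ≤ᵐ[μ] g) (hP : 0 < ∫ y, g y ∂μ) :
    ∃ᵐ y ∂μ, 0 < g y ∧ (∫ y, h y ∂μ) * g y ≤ h y * ∫ y, g y ∂μ := by
  set P := ∫ y, g y ∂μ
  set Q := ∫ y, h y ∂μ
  -- Otherwise `Q g - P h` is a.e. nonnegative with integral `0`, which forces `g = 0` a.e.
  by_contra hcon
  rw [Filter.not_frequently] at hcon
  have hdev_int : Integrable (fun y => Q * g y - h y * P) μ :=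
    (hgi.const_mul Q).sub (hhi.mul_const P)
  have hdev_nonneg : 0 ≤ᵐ[μ] fun y => Q * g y - h y * P := by
    filter_upwards [hcon, hhg] with y hy hhgy
    rcases (hg0 y).eq_or_lt with hgy | hgy
    · replace hgy : g y = 0 := hgy.symm
      show 0 ≤ Q * g y - h y * P
      rw [hgy, mul_zero, zero_sub, neg_nonneg]
      exact mul_nonpos_of_nonpos_of_nonneg (hgy ▸ hhgy) hP.le
    · exact sub_nonneg.2 (not_le.1 fun h' => hy ⟨hgy, h'⟩).le
  have hdev_zero : ∫ y, (Q * g y - h y * P) ∂μ = 0 := by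
    rw [integral_sub (hgi.const_mul Q) (hhi.mul_const P), integral_const_mul, integral_mul_const]
    ring
  have hg_nonpos : ∀ᵐ y ∂μ, g y ≤ 0 := by
    filter_upwards [(integral_eq_zero_iff_of_nonneg_ae hdev_nonneg hdev_int).1 hdev_zero, hcon]
      with y hy hcony
    by_contra! hgy
    exact hcony ⟨hgy, by simpa [sub_eq_zero] using hy.le⟩
  exact (integral_nonpos_of_ae hg_nonpos).not_gt hP

lemma le_Cfun_integral {c : ℝ} (hg0 : 0 ≤ g) (hh0 : 0 ≤ h) (hgi : Integrable g μ)
    (hhi : Integrable h μ) (hhg : h ≤ᵐ[μ] g) (hc : ∀ᵐ y ∂μ, c ≤ Cfun (g y) (h y))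
    (hP : 0 < ∫ y, g y ∂μ) : c ≤ Cfun (∫ y, g y ∂μ) (∫ y, h y ∂μ) := by
  obtain ⟨y, ⟨hgy, hratio⟩, hhgy, hcy⟩ :=
    ((frequently_integral_mul_le hg0 hgi hhi hhg hP).and_eventually (hhg.and hc)).exists
  exact hcy.trans (Cfun_le_Cfun hgy hP hhgy (integral_nonneg hh0) hratio)

lemma integral_add_mul_Cfun_sub_le {c δ : ℝ} (hg : Measurable g) (hh : Measurable h)
    (hg0 : 0 ≤ g) (hh0 : 0 ≤ h) (hgi : Integrable g μ) (hhi : Integrable h μ)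
    (hhg : h ≤ᵐ[μ] g) (hlo : ∀ᵐ y ∂μ, c ≤ Cfun (g y) (h y))
    (hup : ∀ᵐ y ∂μ, Cfun (g y) (h y) ≤ c + δ) :
    ∫ y, (g y + h y) * Cfun (g y) (h y) ∂μ
        - ((∫ y, g y ∂μ) + ∫ y, h y ∂μ) * Cfun (∫ y, g y ∂μ) (∫ y, h y ∂μ)
      ≤ δ * ((∫ y, g y ∂μ) + ∫ y, h y ∂μ) := by
  set P := ∫ y, g y ∂μ
  set Q := ∫ y, h y ∂μ
  have hupper : ∫ y, (g y + h y) * Cfun (g y) (h y) ∂μ ≤ (P + Q) * (c + δ) := by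
    calc ∫ y, (g y + h y) * Cfun (g y) (h y) ∂μ ≤ ∫ y, (g y + h y) * (c + δ) ∂μ :=
          integral_mono_ae (integrable_add_mul_Cfun hg hh hg0 hh0 hgi hhi)
            ((hgi.add hhi).mul_const _)
            (hup.mono fun y hy => mul_le_mul_of_nonneg_left hy (add_nonneg (hg0 y) (hh0 y)))
      _ = (P + Q) * (c + δ) := by rw [integral_mul_const, integral_add hgi hhi]
  have hlower : (P + Q) * c ≤ (P + Q) * Cfun P Q := by
    have hP0 : 0 ≤ P := integral_nonneg hg0
    rcases hP0.eq_or_lt with hP | hP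
    · have hQ : Q = 0 := le_antisymm (hP ▸ integral_mono_ae hhi hgi hhg) (integral_nonneg hh0)
      rw [← hP, hQ, add_zero, zero_mul, zero_mul]
    · exact mul_le_mul_of_nonneg_left (le_Cfun_integral hg0 hh0 hgi hhi hhg hlo hP)
        (add_nonneg hP.le (integral_nonneg hh0))
  linarith

end Integral

lemma integral_Ici_add_integral_Ici_of_eq_comp_neg {g h : ℝ → ℝ} (hg : Integrable g)
    (hgh : ∀ y, g y = h (-y)) :
    (∫ y in Ici 0, g y) + ∫ y in Ici 0, h y = ∫ y, g y := by
  have hh : ∀ y, h y = g (-y) := fun y => by rw [hgh, neg_neg]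
  simp only [hh]
  rw [integral_Ici_eq_integral_Ioi (f := fun y => g (-y)), integral_comp_neg_Ioi, neg_zero,
    integral_Ici_eq_integral_Ioi, add_comm,
    intervalIntegral.integral_Iic_add_Ioi hg.integrableOn hg.integrableOn]

section Partition

variable {f : Bool → ℝ → ℝ} {ν : ℕ}

lemma measurableSet_Aset (hmeas : ∀ x, Measurable (f x)) (i : Fin ν) :
    MeasurableSet (Aset f ν i) := by
  have hC : Measurable fun y => Cfun (f false y) (f true y) :=
    measurable_Cfun.comp ((hmeas false).prodMk (hmeas true))
  by_cases hlast : (i : ℕ) + 1 = ν <;> simp only [Aset, hlast, ↓reduceIte]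
  · exact measurableSet_Ici.inter ((measurableSet_le measurable_const hC).inter
      (measurableSet_le hC measurable_const))
  · exact measurableSet_Ici.inter ((measurableSet_le measurable_const hC).inter
      (measurableSet_lt hC measurable_const))

lemma Cfun_le_of_mem_Aset {i : Fin ν} {y : ℝ} (hy : y ∈ Aset f ν i) :
    Cfun (f false y) (f true y) ≤ ((i : ℝ) + 1) / ν := by
  obtain ⟨-, -, hy⟩ := hy
  split_ifs at hy with hlast
  · rwa [← Nat.cast_add_one, hlast, div_self (Nat.cast_ne_zero.2 (Fin.pos i).ne')]
  · exact hy.le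

lemma pairwise_disjoint_Aset : Pairwise (Disjoint on Aset f ν) := by
  suffices h : ∀ i j : Fin ν, i < j → Disjoint (Aset f ν i) (Aset f ν j) from
    fun i j hij => hij.lt_or_gt.elim (h i j) fun hji => (h j i hji).symm
  intro i j hij
  refine Set.disjoint_left.2 fun y ⟨_, _, hyi⟩ ⟨_, hyj, _⟩ => ?_
  rw [if_neg (by omega : (i : ℕ) + 1 ≠ ν)] at hyi
  have hij' : (i : ℝ) + 1 ≤ j := by exact_mod_cast hij
  have : ((i : ℝ) + 1) / ν ≤ (j : ℝ) / ν := by gcongr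
  linarith

lemma iUnion_Aset (hν : 0 < ν) (hnonneg : ∀ x y, 0 ≤ f x y) :
    ⋃ i : Fin ν, Aset f ν i = Ici 0 := by
  refine (Set.iUnion_subset fun i y hy => hy.1).antisymm fun y hy => ?_
  set c := Cfun (f false y) (f true y)
  have hc0 : 0 ≤ c := Cfun_nonneg (hnonneg false y) (hnonneg true y)
  have hc1 : c ≤ 1 := Cfun_le_one (hnonneg false y) (hnonneg true y)
  have hν' : (0 : ℝ) < ν := by exact_mod_cast hν
  set k := min ⌊ν * c⌋₊ (ν - 1) with hk_def
  have hk : (k : ℝ) ≤ ν * c :=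
    (Nat.cast_le.2 (min_le_left _ _)).trans (Nat.floor_le (by positivity))
  refine Set.mem_iUnion.2 ⟨⟨k, by omega⟩, hy, by rwa [div_le_iff₀' hν'], ?_⟩
  split_ifs with hlast
  · exact hc1
  · have hfloor : ⌊ν * c⌋₊ = k := by simp only at hlast; omega
    rw [lt_div_iff₀' hν']
    have hlt := Nat.lt_floor_add_one ((ν : ℝ) * c)
    rw [hfloor] at hlt
    exact hlt

lemma integral_Ici_eq_sum_Aset (hν : 0 < ν) (hmeas : ∀ x, Measurable (f x))
    (hnonneg : ∀ x y, 0 ≤ f x y) {φ : ℝ → ℝ} (hφ : IntegrableOn φ (Ici 0)) :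
    ∫ y in Ici 0, φ y = ∑ i, ∫ y in Aset f ν i, φ y := by
  rw [← iUnion_Aset hν hnonneg] at hφ ⊢
  exact integral_iUnion_fintype (measurableSet_Aset hmeas) pairwise_disjoint_Aset
    fun i => hφ.mono_set (Set.subset_iUnion _ i)

end Partition

/-- the continuous-to-discrete degrading transform loses at most
`1/ν = 2/μ` in capacity. -/
theorem continuous_degrading_capacity_loss (f : Bool → ℝ → ℝ) (ν : ℕ) (hν : 0 < ν)
    (hmeas : ∀ x, Measurable (f x))
    (hnonneg : ∀ x y, 0 ≤ f x y)
    (hint : ∀ x, Integrable (f x))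
    (hdens : ∀ x, ∫ y, f x y = 1)
    (hsymm : ∀ y, f false y = f true (-y))
    (hsane : ∀ y : ℝ, 0 ≤ y → f true y ≤ f false y) :
    0 ≤ Icont f - Idisc f ν ∧ Icont f - Idisc f ν ≤ 1 / ν := by
  have hA := measurableSet_Aset (ν := ν) hmeas
  have hqzbar (i : Fin ν) : qzbar f ν i = ∫ y in Aset f ν i, f true y := by
    simp only [qzbar, hsymm, neg_neg]
  have hloss : Icont f - Idisc f ν = ∑ i, ((∫ y in Aset f ν i,
      (f false y + f true y) * Cfun (f false y) (f true y)) - (qz f ν i + qzbar f ν i) *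
        Cfun (qz f ν i) (qzbar f ν i)) := by
    rw [Icont, integral_Ici_eq_sum_Aset hν hmeas hnonneg
      (integrable_add_mul_Cfun (hmeas false) (hmeas true) (hnonneg false) (hnonneg true)
        (hint false) (hint true)).integrableOn, Idisc, Finset.sum_sub_distrib]
  have hmass : ∑ i, (qz f ν i + qzbar f ν i) = 1 := by
    simp only [Finset.sum_add_distrib, qz, hqzbar,
      ← integral_Ici_eq_sum_Aset hν hmeas hnonneg (hint _).integrableOn]
    rw [integral_Ici_add_integral_Ici_of_eq_comp_neg (hint false) hsymm, hdens]
  rw [hloss]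
  constructor
  · refine Finset.sum_nonneg fun i _ => sub_nonneg.2 ?_
    rw [hqzbar]
    exact add_mul_Cfun_integral_le (hmeas false) (hmeas true) (hnonneg false) (hnonneg true)
      (hint false).integrableOn (hint true).integrableOn
  · calc _ ≤ ∑ i, 1 / (ν : ℝ) * (qz f ν i + qzbar f ν i) := by
          refine Finset.sum_le_sum fun i _ => ?_
          rw [hqzbar]
          refine integral_add_mul_Cfun_sub_le (hmeas false) (hmeas true) (hnonneg false)
            (hnonneg true) (hint false).integrableOn (hint true).integrableOn
            (ae_restrict_of_forall_mem (hA i) fun y hy => hsane y hy.1)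
            (ae_restrict_of_forall_mem (hA i) fun y hy => hy.2.1)
            (ae_restrict_of_forall_mem (hA i) fun y hy => ?_)
          rw [← add_div]
          exact Cfun_le_of_mem_Aset hy
      _ = 1 / ν := by rw [← Finset.mul_sum, hmass, mul_one]
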